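/- Let Λ' ⊂ ℝ^n be a full-rank lattice, σ_s, σ_w > 0, α = σ_s²/(σ_s²+σ_w²), σ_eff² = σ_s²σ_w²/(σ_s²+σ_w²). Let X ~ D_{Λ', σ_s} and W ~ N(0, σ_w² I_n) be independent and let g be the probability density of W_eff = (1−α)X + αW. Then for every w ∈ ℝ^n, g(w) ≤ (1 + ε_{Λ'}(√α·σ_s)) · f_{σ_eff}(w), where ε_{Λ'} denotes the flatness factor of Λ'. -/

import Mathlib

open MeasureTheory Real Filter Pointwise
open scoped ENNReal RealInnerProductSpace

noncomputable section

/-- The (continuous) Gaussian density with parameter `σ` on `ℝⁿ`: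
`f_σ(x) = (2πσ²)^{-n/2} exp(-‖x‖²/(2σ²))`. -/
def gaussF (n : ℕ) (σ : ℝ) (x : EuclideanSpace ℝ (Fin n)) : ℝ :=
  (2 * π * σ ^ 2) ^ (-(n : ℝ) / 2) * Real.exp (-‖x‖ ^ 2 / (2 * σ ^ 2))

/-- The Gaussian mass `f_σ(S) = Σ_{y ∈ S} f_σ(y)` of a (countable) set `S ⊆ ℝⁿ`. -/
def gaussMass (n : ℕ) (σ : ℝ) (S : Set (EuclideanSpace ℝ (Fin n))) : ℝ :=
  ∑' y : S, gaussF n σ y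

/-- The Gaussian measure `N(0, σ² Iₙ)` on `ℝⁿ`, given by its density w.r.t. Lebesgue measure. -/
def gaussMeasure (n : ℕ) (σ : ℝ) : Measure (EuclideanSpace ℝ (Fin n)) :=
  volume.withDensity fun x => ENNReal.ofReal (gaussF n σ x)

/-- The coset `S + t` of a set `S ⊆ ℝⁿ`, i.e. `{x | x - t ∈ S}`. -/
def coset (n : ℕ) (S : Set (EuclideanSpace ℝ (Fin n))) (t : EuclideanSpace ℝ (Fin n)) :
    Set (EuclideanSpace ℝ (Fin n)) := {x | x - t ∈ S}

/-- The Voronoi cell of `S`: `{x | ⟪x,y⟫ ≤ ‖y‖²/2 for all y ∈ S}`. -/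
def voronoi (n : ℕ) (S : Set (EuclideanSpace ℝ (Fin n))) : Set (EuclideanSpace ℝ (Fin n)) :=
  {x | ∀ y ∈ S, ⟪x, y⟫ ≤ ‖y‖ ^ 2 / 2}

/-- The inverse error function `err⁻¹_ε(Λ)`: the least `s > 0` such that a standard Gaussian
leaves `s · V(Λ)` with probability at most `ε`. -/
def errInv (n : ℕ) (ε : ℝ) (S : Set (EuclideanSpace ℝ (Fin n))) : ℝ :=
  sInf {s : ℝ | 0 < s ∧ gaussMeasure n 1 ((s • voronoi n S)ᶜ) ≤ ENNReal.ofReal ε}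

/-- The Shannon entropy (in nats) of the discrete Gaussian `D_{S,σ}` supported on `S`,
which assigns mass `f_σ(y)/f_σ(S)` to each `y ∈ S`. -/
def dgEntropy (n : ℕ) (σ : ℝ) (S : Set (EuclideanSpace ℝ (Fin n))) : ℝ :=
  -∑' y : S, (gaussF n σ y / gaussMass n σ S) * Real.log (gaussF n σ y / gaussMass n σ S)

/-- The flatness factor `ε_Λ(σ) = sup_{x ∈ V(Λ)} |V(Λ)·f_σ(Λ+x) − 1|`. -/
def flatness (n : ℕ) (L : Submodule ℤ (EuclideanSpace ℝ (Fin n))) (σ : ℝ) : ℝ :=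
  ⨆ x : voronoi n (L : Set (EuclideanSpace ℝ (Fin n))),
    |ZLattice.covolume L volume *
        gaussMass n σ (coset n (L : Set (EuclideanSpace ℝ (Fin n))) x) - 1|

/-!
Completing the square turns each summand into `f_{σ_eff}(w) · f_{√α σ_s}(x - w)`, so the density
equals `f_{σ_eff}(w) · f_{√α σ_s}(Λ' - w) / f_{σ_s}(Λ')`. Since `Λ' - w` is also the coset of a point
of the Voronoi cell, the flatness factor bounds `V(Λ') · f_{√α σ_s}(Λ' - w)` by `1 + ε`. It remains
to see `V(Λ') · f_σ(Λ') ≥ 1`. Unfolding `∫ f_σ = 1` over a fundamental domain `F` writes `1/V(Λ')`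
as the mean over `F` of the periodization `x ↦ f_σ(Λ' + x)`, and this periodization is maximal
at `x = 0`: `f_σ` is the autocorrelation `g ⋆ g` of `g = f_{σ/√2}`, so with `Φ` the periodization
of `g` its value at `x` is `∫_F Φ(y) Φ(y - x) dy ≤ ∫_F Φ²` by AM-GM.
-/

lemma ENNReal.two_mul_le_add_sq (a b : ℝ≥0∞) : 2 * a * b ≤ a ^ 2 + b ^ 2 := by
  rcases eq_or_ne a ⊤ with rfl | ha
  · simp
  rcases eq_or_ne b ⊤ with rfl | hb
  · simp
  lift a to NNReal using ha
  lift b to NNReal using hb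
  exact_mod_cast _root_.two_mul_le_add_sq a b

section Periodization

variable {E : Type*} [AddCommGroup E] (L : Submodule ℤ E)

def periodization (g : E → ℝ≥0∞) (x : E) : ℝ≥0∞ := ∑' l : L, g (l + x)

variable {L}

lemma periodization_add (g : E → ℝ≥0∞) (l : L) (x : E) :
    periodization L g (l + x) = periodization L g x := by
  unfold periodization
  rw [← (Equiv.addRight l).tsum_eq fun c : L => g (c + x)]
  simp [add_assoc]

lemma periodization_neg {g : E → ℝ≥0∞} (hg : ∀ y, g (-y) = g y) (x : E) :
    periodization L g (-x) = periodization L g x := by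
  unfold periodization
  rw [← (Equiv.neg L).tsum_eq]
  refine tsum_congr fun l => ?_
  rw [← hg]
  simp [add_comm]

variable [MeasurableSpace E] [MeasurableAdd₂ E] [Countable L]

@[fun_prop]
lemma measurable_periodization {g : E → ℝ≥0∞} (hg : Measurable g) :
    Measurable (periodization L g) :=
  Measurable.tsum fun _ => hg.comp (measurable_const_add _)

lemma lintegral_mul_eq_setLIntegral_periodization {μ : Measure E} [μ.IsAddLeftInvariant]
    {F : Set E} (hF : IsAddFundamentalDomain L F μ) {g q : E → ℝ≥0∞} (hg : Measurable g)
    (hq : Measurable q) (hq_per : ∀ (l : L) y, q (l + y) = q y) :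
    ∫⁻ y, g y * q y ∂μ = ∫⁻ y in F, periodization L g y * q y ∂μ := by
  have : MeasurableVAdd L E := (inferInstance : MeasurableVAdd L.toAddSubgroup E)
  have : VAddInvariantMeasure L E μ := (inferInstance : VAddInvariantMeasure L.toAddSubgroup E μ)
  rw [hF.lintegral_eq_tsum'', ← lintegral_tsum fun _ => by fun_prop]
  simp_rw [periodization, ← ENNReal.tsum_mul_right]
  refine lintegral_congr fun y => tsum_congr fun l => ?_
  exact congrArg (g (l + y) * ·) (hq_per l y)

variable [MeasurableNeg E]

lemma tsum_lconvolution_self_add_eq {μ : Measure E} [μ.IsAddLeftInvariant] {F : Set E}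
    (hF : IsAddFundamentalDomain L F μ) {g : E → ℝ≥0∞} (hg : Measurable g)
    (hg_even : ∀ y, g (-y) = g y) (x : E) :
    ∑' l : L, (g ⋆ₗ[μ] g) (l + x) =
      ∫⁻ y in F, periodization L g y * periodization L g (y - x) ∂μ := by
  calc ∑' l : L, (g ⋆ₗ[μ] g) (l + x) = ∫⁻ y, g y * periodization L g (x - y) ∂μ := by
        simp_rw [lconvolution_def, periodization, ← ENNReal.tsum_mul_left]
        rw [lintegral_tsum fun _ => by fun_prop]
        congr! 4 with l y
        rw [neg_add_eq_sub, add_sub_assoc]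
    _ = ∫⁻ y in F, periodization L g y * periodization L g (x - y) ∂μ :=
        lintegral_mul_eq_setLIntegral_periodization hF hg (by fun_prop)
          fun l y => by rw [← periodization_add g (-l) (x - y)]; congr 1; push_cast; abel
    _ = ∫⁻ y in F, periodization L g y * periodization L g (y - x) ∂μ := by
        simp_rw [← neg_sub x, periodization_neg hg_even]

lemma setLIntegral_periodization_sub_sq {μ : Measure E} [μ.IsAddLeftInvariant] {F : Set E}
    (hF : IsAddFundamentalDomain L F μ) {g : E → ℝ≥0∞} (hg : Measurable g) (x : E) :
    ∫⁻ y in F, periodization L g (y - x) ^ 2 ∂μ = ∫⁻ y, g y * periodization L g y ∂μ := by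
  calc ∫⁻ y in F, periodization L g (y - x) ^ 2 ∂μ
      = ∫⁻ y in F, periodization L (fun y => g (y - x)) y * periodization L g (y - x) ∂μ := by
        simp_rw [sq, periodization, add_sub_assoc]
    _ = ∫⁻ y, g (y - x) * periodization L g (y - x) ∂μ :=
        (lintegral_mul_eq_setLIntegral_periodization hF (by fun_prop) (by fun_prop)
          fun l y => by simp only [add_sub_assoc, periodization_add]).symm
    _ = ∫⁻ y, g y * periodization L g y ∂μ :=
        lintegral_sub_right_eq_self (fun y => g y * periodization L g y) x

theorem tsum_lconvolution_self_add_le {μ : Measure E} [μ.IsAddLeftInvariant] {F : Set E}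
    (hF : IsAddFundamentalDomain L F μ) {g : E → ℝ≥0∞} (hg : Measurable g)
    (hg_even : ∀ y, g (-y) = g y) (x : E) :
    ∑' l : L, (g ⋆ₗ[μ] g) (l + x) ≤ ∑' l : L, (g ⋆ₗ[μ] g) l := by
  have hsum0 := tsum_lconvolution_self_add_eq hF hg hg_even 0
  simp only [add_zero] at hsum0
  rw [tsum_lconvolution_self_add_eq hF hg hg_even x, hsum0]
  refine (ENNReal.mul_le_mul_iff_right two_ne_zero ENNReal.ofNat_ne_top).1 ?_
  calc 2 * ∫⁻ y in F, periodization L g y * periodization L g (y - x) ∂μ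
      = ∫⁻ y in F, 2 * periodization L g (y - 0) * periodization L g (y - x) ∂μ := by
        rw [← lintegral_const_mul _ (by fun_prop)]
        simp_rw [sub_zero, mul_assoc]
    _ ≤ ∫⁻ y in F, periodization L g (y - 0) ^ 2 + periodization L g (y - x) ^ 2 ∂μ :=
        lintegral_mono fun y => ENNReal.two_mul_le_add_sq _ _
    _ = 2 * ∫⁻ y in F, periodization L g y * periodization L g (y - 0) ∂μ := by
        rw [lintegral_add_left (by fun_prop), setLIntegral_periodization_sub_sq hF hg,
          setLIntegral_periodization_sub_sq hF hg, ← setLIntegral_periodization_sub_sq hF hg 0,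
          two_mul]
        simp_rw [sq, sub_zero]

end Periodization

section Gaussian

variable {n : ℕ}

lemma gaussF_nonneg (σ : ℝ) (x : EuclideanSpace ℝ (Fin n)) : 0 ≤ gaussF n σ x := by
  unfold gaussF; positivity

@[fun_prop]
lemma continuous_gaussF (σ : ℝ) : Continuous (gaussF n σ) := by
  unfold gaussF; fun_prop

lemma gaussF_eq_mul_exp (σ : ℝ) (x : EuclideanSpace ℝ (Fin n)) :
    gaussF n σ x = (2 * π * σ ^ 2) ^ (-(n : ℝ) / 2) * rexp (-(2 * σ ^ 2)⁻¹ * ‖x‖ ^ 2) := by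
  rw [gaussF]; ring_nf

lemma integral_gaussF {σ : ℝ} (hσ : σ ≠ 0) : ∫ x, gaussF n σ x = 1 := by
  simp_rw [gaussF_eq_mul_exp, integral_const_mul]
  rw [GaussianFourier.integral_rexp_neg_mul_sq_norm (by positivity), finrank_euclideanSpace,
    Fintype.card_fin, div_inv_eq_mul, show π * (2 * σ ^ 2) = 2 * π * σ ^ 2 by ring,
    ← Real.rpow_add (by positivity), neg_div, neg_add_cancel, Real.rpow_zero]

lemma integrable_gaussF {σ : ℝ} (hσ : σ ≠ 0) : Integrable (gaussF n σ) :=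
  integrable_of_integral_eq_one (integral_gaussF hσ)

lemma lintegral_ofReal_gaussF {σ : ℝ} (hσ : σ ≠ 0) :
    ∫⁻ x, ENNReal.ofReal (gaussF n σ x) = 1 := by
  rw [← ofReal_integral_eq_lintegral_ofReal (integrable_gaussF hσ)
    (.of_forall (gaussF_nonneg σ)), integral_gaussF hσ, ENNReal.ofReal_one]

lemma gaussF_mul_gaussF_sub_smul {s t u r β γ : ℝ} (hs : s ≠ 0) (ht : t ≠ 0)
    (hu : u ^ 2 = t ^ 2 + β ^ 2 * s ^ 2) (hr : r ^ 2 = s ^ 2 * t ^ 2 / u ^ 2)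
    (hγ : γ = β * s ^ 2 / u ^ 2) (x w : EuclideanSpace ℝ (Fin n)) :
    gaussF n s x * gaussF n t (w - β • x) = gaussF n u w * gaussF n r (x - γ • w) := by
  have hD : t ^ 2 + β ^ 2 * s ^ 2 ≠ 0 := by positivity
  unfold gaussF
  rw [mul_mul_mul_comm, mul_mul_mul_comm ((2 * π * u ^ 2) ^ _), ← Real.exp_add, ← Real.exp_add,
    ← Real.mul_rpow (by positivity) (by positivity),
    ← Real.mul_rpow (by positivity) (by positivity)]
  congr 1
  · rw [hr, hu]; field_simp
  · congr 1
    rw [norm_sub_sq_real, norm_sub_sq_real, norm_smul, norm_smul, real_inner_smul_right,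
      real_inner_smul_right, real_inner_comm, mul_pow, mul_pow, Real.norm_eq_abs,
      Real.norm_eq_abs, sq_abs, sq_abs, hr, hγ, hu]
    field_simp
    ring

lemma gaussF_mul_gaussF_effective_noise {σs σw α σeff : ℝ} (hσs : 0 < σs) (hσw : 0 < σw)
    (hα : α = σs ^ 2 / (σs ^ 2 + σw ^ 2))
    (hσeff : σeff = √(σs ^ 2 * σw ^ 2 / (σs ^ 2 + σw ^ 2))) (x w : EuclideanSpace ℝ (Fin n)) :
    gaussF n σs x * gaussF n (α * σw) (w - (1 - α) • x) =
      gaussF n σeff w * gaussF n (√α * σs) (x - w) := by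
  have hα0 : 0 < α := hα ▸ by positivity
  have hσeff2 : σeff ^ 2 = σs ^ 2 * σw ^ 2 / (σs ^ 2 + σw ^ 2) := by
    rw [hσeff, Real.sq_sqrt (by positivity)]
  refine (gaussF_mul_gaussF_sub_smul (γ := 1) hσs.ne' (by positivity) ?_ ?_ ?_ x w).trans
    (by rw [one_smul])
  · rw [hσeff2, hα]; field_simp; ring
  · rw [mul_pow, Real.sq_sqrt hα0.le, hσeff2, hα]; field_simp
  · rw [hσeff2, hα]; field_simp; ring

lemma lconvolution_ofReal_gaussF {σ : ℝ} (hσ : σ ≠ 0) :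
    (fun x => ENNReal.ofReal (gaussF n (σ / √2) x)) ⋆ₗ
        (fun x => ENNReal.ofReal (gaussF n (σ / √2) x)) =
      fun x => ENNReal.ofReal (gaussF n σ x) := by
  have h2 : (√2) ^ 2 = 2 := Real.sq_sqrt zero_le_two
  ext y
  have hprod : ∀ x, gaussF n (σ / √2) x * gaussF n (σ / √2) (-x + y) =
      gaussF n σ y * gaussF n (σ / 2) (x - (1 / 2 : ℝ) • y) := fun x => by
    have hσ2 : σ / √2 ≠ 0 := by positivity
    have := gaussF_mul_gaussF_sub_smul (n := n) (u := σ) (r := σ / 2) (β := 1) (γ := 1 / 2)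
      hσ2 hσ2 (by rw [div_pow, h2]; ring) (by rw [div_pow, div_pow, h2]; field_simp)
      (by rw [div_pow, h2]; field_simp) x y
    rwa [one_smul, ← neg_add_eq_sub] at this
  simp_rw [lconvolution_def, ← ENNReal.ofReal_mul (gaussF_nonneg _ _), hprod,
    ENNReal.ofReal_mul (gaussF_nonneg _ _)]
  rw [lintegral_const_mul _ (by fun_prop), lintegral_sub_right_eq_self
    (fun x => ENNReal.ofReal (gaussF n (σ / 2) x)), lintegral_ofReal_gaussF (by positivity),
    mul_one]

lemma gaussF_le_mul_inv_norm_pow {σ : ℝ} (hσ : σ ≠ 0) (k : ℕ) {y : EuclideanSpace ℝ (Fin n)}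
    (hy : y ≠ 0) :
    gaussF n σ y ≤ (2 * π * σ ^ 2) ^ (-(n : ℝ) / 2) * (k.factorial * (2 * σ ^ 2) ^ k) *
      ‖y‖⁻¹ ^ (2 * k) := by
  have hX : 0 < ‖y‖ ^ 2 / (2 * σ ^ 2) := by positivity
  have hexp : rexp (-‖y‖ ^ 2 / (2 * σ ^ 2)) ≤ k.factorial * (2 * σ ^ 2) ^ k * ‖y‖⁻¹ ^ (2 * k) :=
    calc rexp (-‖y‖ ^ 2 / (2 * σ ^ 2)) = (rexp (‖y‖ ^ 2 / (2 * σ ^ 2)))⁻¹ := by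
          rw [neg_div, Real.exp_neg]
      _ ≤ ((‖y‖ ^ 2 / (2 * σ ^ 2)) ^ k / k.factorial)⁻¹ :=
          inv_anti₀ (by positivity) (Real.pow_div_factorial_le_exp _ hX.le k)
      _ = k.factorial * (2 * σ ^ 2) ^ k * ‖y‖⁻¹ ^ (2 * k) := by
          rw [div_pow, inv_div, div_div_eq_mul_div, ← pow_mul, inv_pow, div_eq_mul_inv]
  have hC : 0 ≤ (2 * π * σ ^ 2) ^ (-(n : ℝ) / 2) := by positivity
  exact (mul_le_mul_of_nonneg_left hexp hC).trans_eq (mul_assoc _ _ _).symm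

lemma mem_voronoi_iff {S : Set (EuclideanSpace ℝ (Fin n))} {v : EuclideanSpace ℝ (Fin n)} :
    v ∈ voronoi n S ↔ ∀ y ∈ S, ‖v‖ ≤ ‖v - y‖ := by
  refine forall₂_congr fun y _ => ?_
  rw [← sq_le_sq₀ (norm_nonneg _) (norm_nonneg _), norm_sub_sq_real]
  constructor <;> intro h <;> linarith

section Lattice

variable (L : Submodule ℤ (EuclideanSpace ℝ (Fin n)))

lemma gaussMass_coset (σ : ℝ) (t : EuclideanSpace ℝ (Fin n)) :
    gaussMass n σ (coset n L t) = ∑' l : L, gaussF n σ (l + t) := by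
  let e : L ≃ coset n L t :=
    { toFun l := ⟨l + t, by simp [coset]⟩
      invFun y := ⟨y - t, y.2⟩
      left_inv l := by ext; simp
      right_inv y := by ext; simp }
  exact (e.tsum_eq fun y => gaussF n σ y).symm

lemma coset_sub_of_mem {y : EuclideanSpace ℝ (Fin n)} (hy : y ∈ L) (t : EuclideanSpace ℝ (Fin n)) :
    coset n L (t - y) = coset n L t := by
  ext x
  simp only [coset, SetLike.mem_coe, sub_sub_eq_add_sub, add_sub_right_comm,
    L.add_mem_iff_left hy]

variable [DiscreteTopology L]

lemma summable_gaussF_add {σ : ℝ} (hσ : σ ≠ 0) (x : EuclideanSpace ℝ (Fin n)) :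
    Summable fun l : L => gaussF n σ (l + x) := by
  set k := Module.finrank ℤ L + 1
  refine Summable.of_norm_bounded_eventually
    ((ZLattice.summable_norm_sub_inv_pow L (2 * k) (by omega) (-x)).mul_left
      ((2 * π * σ ^ 2) ^ (-(n : ℝ) / 2) * (k.factorial * (2 * σ ^ 2) ^ k))) ?_
  rw [Filter.eventually_cofinite]
  refine Set.Subsingleton.finite (s := {l : L | (l : EuclideanSpace ℝ (Fin n)) + x = 0})
    (fun a ha b hb => Subtype.ext (add_right_cancel (ha.trans hb.symm))) |>.subset fun l hl => ?_
  by_contra hlx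
  refine hl ?_
  rw [Real.norm_of_nonneg (gaussF_nonneg _ _), sub_neg_eq_add]
  exact gaussF_le_mul_inv_norm_pow hσ k hlx

lemma exists_sub_mem_voronoi (t : EuclideanSpace ℝ (Fin n)) : ∃ y ∈ L, t - y ∈ voronoi n L := by
  have hclosed : IsClosed (L : Set (EuclideanSpace ℝ (Fin n))) :=
    @AddSubgroup.isClosed_of_discrete _ _ _ _ _ L.toAddSubgroup (inferInstanceAs (DiscreteTopology L))
  obtain ⟨y, hyL, hy⟩ := hclosed.exists_infDist_eq_dist ⟨0, L.zero_mem⟩ t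
  refine ⟨y, hyL, mem_voronoi_iff.2 fun z hz => ?_⟩
  rw [← dist_eq_norm, ← hy, sub_sub, ← dist_eq_norm]
  exact Metric.infDist_le_dist_of_mem (L.add_mem hyL hz)

variable [IsZLattice ℝ L]

lemma tsum_ofReal_gaussF_add_le {σ : ℝ} (hσ : σ ≠ 0) (x : EuclideanSpace ℝ (Fin n)) :
    ∑' l : L, ENNReal.ofReal (gaussF n σ (l + x)) ≤ ∑' l : L, ENNReal.ofReal (gaussF n σ l) := by
  have h := tsum_lconvolution_self_add_le
    (ZLattice.isAddFundamentalDomain (Module.Free.chooseBasis ℤ L) volume)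
    (g := fun x => ENNReal.ofReal (gaussF n (σ / √2) x)) (by fun_prop)
    (fun y => by rw [gaussF, gaussF, norm_neg]) x
  rwa [lconvolution_ofReal_gaussF hσ] at h

lemma tsum_gaussF_add_le {σ : ℝ} (hσ : σ ≠ 0) (x : EuclideanSpace ℝ (Fin n)) :
    ∑' l : L, gaussF n σ (l + x) ≤ ∑' l : L, gaussF n σ l := by
  have h := tsum_ofReal_gaussF_add_le L hσ x
  rwa [← ENNReal.ofReal_tsum_of_nonneg (fun _ => gaussF_nonneg _ _) (summable_gaussF_add L hσ x),
    ← ENNReal.ofReal_tsum_of_nonneg (fun _ => gaussF_nonneg _ _)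
      (by simpa using summable_gaussF_add L hσ 0),
    ENNReal.ofReal_le_ofReal_iff (tsum_nonneg fun _ => gaussF_nonneg _ _)] at h

lemma one_le_covolume_mul_tsum_gaussF {σ : ℝ} (hσ : σ ≠ 0) :
    1 ≤ ZLattice.covolume L * ∑' l : L, gaussF n σ l := by
  set b := Module.Free.chooseBasis ℤ L
  set F := ZSpan.fundamentalDomain (b.ofZLatticeBasis ℝ)
  have hF : IsAddFundamentalDomain L F volume := ZLattice.isAddFundamentalDomain b volume
  have hS := summable_gaussF_add L hσ 0
  simp only [add_zero] at hS
  have hmass : 1 ≤ volume F * ∑' l : L, ENNReal.ofReal (gaussF n σ l) :=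
    calc 1 = ∫⁻ y, ENNReal.ofReal (gaussF n σ y) * 1 := by
          simp_rw [mul_one, lintegral_ofReal_gaussF hσ]
      _ = ∫⁻ y in F, periodization L (fun y => ENNReal.ofReal (gaussF n σ y)) y * 1 :=
          lintegral_mul_eq_setLIntegral_periodization hF (by fun_prop) measurable_const
            fun _ _ => rfl
      _ ≤ ∫⁻ _ in F, ∑' l : L, ENNReal.ofReal (gaussF n σ l) :=
          lintegral_mono fun y => (mul_one _).trans_le (tsum_ofReal_gaussF_add_le L hσ y)
      _ = volume F * ∑' l : L, ENNReal.ofReal (gaussF n σ l) := by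
          rw [setLIntegral_const, mul_comm]
  rw [← ENNReal.ofReal_tsum_of_nonneg (fun _ => gaussF_nonneg _ _) hS] at hmass
  have hfin : volume F ≠ ⊤ := (ZSpan.fundamentalDomain_isBounded _).measure_lt_top.ne
  have := ENNReal.toReal_mono (ENNReal.mul_ne_top hfin ENNReal.ofReal_ne_top) hmass
  rwa [ENNReal.toReal_mul, ENNReal.toReal_ofReal (tsum_nonneg fun _ => gaussF_nonneg _ _),
    ← measureReal_def, ← ZLattice.covolume_eq_measure_fundamentalDomain L volume hF,
    ENNReal.toReal_one] at this

lemma covolume_mul_gaussMass_coset_le {σ : ℝ} (hσ : σ ≠ 0) (t : EuclideanSpace ℝ (Fin n)) :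
    ZLattice.covolume L * gaussMass n σ (coset n L t) ≤ 1 + flatness n L σ := by
  have hcov := (ZLattice.covolume_pos L volume).le
  have hmass : ∀ s, 0 ≤ gaussMass n σ (coset n L s) ∧
      gaussMass n σ (coset n L s) ≤ ∑' l : L, gaussF n σ l := fun s => by
    rw [gaussMass_coset]
    exact ⟨tsum_nonneg fun _ => gaussF_nonneg _ _, tsum_gaussF_add_le L hσ s⟩
  have hbdd : BddAbove (Set.range fun v : voronoi n L =>
      |ZLattice.covolume L * gaussMass n σ (coset n L v) - 1|) := by
    refine ⟨ZLattice.covolume L * ∑' l : L, gaussF n σ l + 1, ?_⟩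
    rintro _ ⟨v, rfl⟩
    have h0 := mul_nonneg hcov (hmass v).1
    have h1 := mul_le_mul_of_nonneg_left (hmass v).2 hcov
    exact abs_le.2 ⟨by linarith, by linarith⟩
  obtain ⟨y, hy, hv⟩ := exists_sub_mem_voronoi L t
  have hle : |ZLattice.covolume L * gaussMass n σ (coset n L (t - y)) - 1| ≤ flatness n L σ :=
    le_ciSup hbdd ⟨t - y, hv⟩
  rw [coset_sub_of_mem L hy] at hle
  linarith [le_abs_self (ZLattice.covolume L * gaussMass n σ (coset n L t) - 1)]

end Lattice

end Gaussian

/-- the density `g` of the effective noise `W_eff = (1−α)X + αW`,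
`X ~ D_{Λ',σ_s}`, `W ~ N(0,σ_w²Iₙ)`, satisfies `g(w) ≤ (1 + ε_{Λ'}(√α·σ_s))·f_{σ_eff}(w)`. -/
theorem density_upper_bound (n : ℕ) (L' : Submodule ℤ (EuclideanSpace ℝ (Fin n)))
    [DiscreteTopology L'] [IsZLattice ℝ L']
    (σs σw : ℝ) (hσs : 0 < σs) (hσw : 0 < σw)
    (α σeff : ℝ)
    (hα : α = σs ^ 2 / (σs ^ 2 + σw ^ 2))
    (hσeff : σeff = Real.sqrt (σs ^ 2 * σw ^ 2 / (σs ^ 2 + σw ^ 2)))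
    (w : EuclideanSpace ℝ (Fin n)) :
    (∑' x : (L' : Set (EuclideanSpace ℝ (Fin n))),
        (gaussF n σs x / gaussMass n σs (L' : Set (EuclideanSpace ℝ (Fin n)))) *
          gaussF n (α * σw) (w - (1 - α) • (x : EuclideanSpace ℝ (Fin n))))
      ≤ (1 + flatness n L' (Real.sqrt α * σs)) * gaussF n σeff w := by
  have hα0 : 0 < α := hα ▸ by positivity
  set ε := flatness n L' (√α * σs)
  set M := gaussMass n σs L'
  set m := gaussMass n (√α * σs) (coset n L' (-w))
  have hm_eq : m = ∑' l : L', gaussF n (√α * σs) (l + -w) := gaussMass_coset L' _ _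
  have hcovM : 1 ≤ ZLattice.covolume L' * M := one_le_covolume_mul_tsum_gaussF L' hσs.ne'
  have hcovm : ZLattice.covolume L' * m ≤ 1 + ε :=
    covolume_mul_gaussMass_coset_le L' (by positivity) (-w)
  have hM : 0 < M :=
    pos_of_mul_pos_right (one_pos.trans_le hcovM) (ZLattice.covolume_pos L' volume).le
  have hm : m ≤ (1 + ε) * M :=
    calc m ≤ m * (ZLattice.covolume L' * M) :=
          le_mul_of_one_le_right (hm_eq ▸ tsum_nonneg fun _ => gaussF_nonneg _ _) hcovM
      _ = ZLattice.covolume L' * m * M := by ring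
      _ ≤ (1 + ε) * M := mul_le_mul_of_nonneg_right hcovm hM.le
  calc ∑' x : (L' : Set (EuclideanSpace ℝ (Fin n))),
        gaussF n σs x / M * gaussF n (α * σw) (w - (1 - α) • (x : EuclideanSpace ℝ (Fin n)))
      = m * gaussF n σeff w / M := by
        rw [hm_eq, ← tsum_mul_right, ← tsum_div_const]
        refine tsum_congr fun x => ?_
        rw [div_mul_eq_mul_div, gaussF_mul_gaussF_effective_noise hσs hσw hα hσeff,
          sub_eq_add_neg, mul_comm]
    _ ≤ (1 + ε) * gaussF n σeff w := by
        rw [div_le_iff₀ hM, mul_right_comm]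
        exact mul_le_mul_of_nonneg_right hm (gaussF_nonneg _ _)
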